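/- Filter-then-verify is exact when the filter relation is contained in the user relation: if ≻_U ⊆ ≻_c, ≻_c is a strict partial order, and O is finite, then {o ∈ P_U | ¬∃o' ∈ P_U, o' ≻_c o} = P_c, where P_U and P_c are the Pareto frontiers of O under ≻_U and ≻_c respectively. -/

import Mathlib

/-! Every object that is `≻_c`-dominated in the finite set `O` is already dominated by a
`≻_c`-maximal one (follow a descending chain, which must stop since `≻_c` is well founded on `O`).
Such a maximal object is also `≻_U`-maximal because `≻_U ⊆ ≻_c`, so the verification step, which
only compares against `P_U`, still sees a witness against every object outside `P_c`. -/

namespace Set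

variable {α : Type*}

def paretoFront (r : α → α → Prop) (O : Set α) : Set α :=
  {o ∈ O | ¬ ∃ o' ∈ O, r o' o}

theorem paretoFront_subset (r : α → α → Prop) (O : Set α) : paretoFront r O ⊆ O :=
  fun _ ho => ho.1

theorem paretoFront_anti {r s : α → α → Prop} (hrs : ∀ x y, r x y → s x y) (O : Set α) :
    paretoFront s O ⊆ paretoFront r O :=
  fun _ ⟨hoO, hmax⟩ => ⟨hoO, fun ⟨o', ho', h⟩ => hmax ⟨o', ho', hrs _ _ h⟩⟩

theorem exists_mem_paretoFront_rel {r : α → α → Prop} {O : Set α} (hwf : O.WellFoundedOn r)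
    (htr : ∀ x y z, r x y → r y z → r x z) {o : α} (ho : o ∈ O) (hdom : ∃ o' ∈ O, r o' o) :
    ∃ a ∈ paretoFront r O, r a o := by
  revert hdom
  refine hwf.induction (P := fun o => (∃ o' ∈ O, r o' o) → ∃ a ∈ paretoFront r O, r a o) ho ?_
  rintro y - ih ⟨z, hz, hzy⟩
  by_cases hzmax : z ∈ paretoFront r O
  · exact ⟨z, hzmax, hzy⟩
  · have hzdom : ∃ o' ∈ O, r o' z := by
      simpa only [paretoFront, mem_sep_iff, hz, true_and, not_not] using hzmax
    obtain ⟨a, ha, haz⟩ := ih z hz hzy hzdom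
    exact ⟨a, ha, htr _ _ _ haz hzy⟩

theorem paretoFront_paretoFront_of_le {rU rc : α → α → Prop} {O : Set α}
    (hsub : ∀ x y, rU x y → rc x y) (hwf : O.WellFoundedOn rc)
    (htr : ∀ x y z, rc x y → rc y z → rc x z) :
    paretoFront rc (paretoFront rU O) = paretoFront rc O := by
  ext o
  constructor
  · rintro ⟨hoU, hnot⟩
    refine ⟨paretoFront_subset rU O hoU, fun hdom => ?_⟩
    obtain ⟨a, ha, hao⟩ := exists_mem_paretoFront_rel hwf htr (paretoFront_subset rU O hoU) hdom
    exact hnot ⟨a, paretoFront_anti hsub O ha, hao⟩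
  · intro ho
    exact ⟨paretoFront_anti hsub O ho,
      fun ⟨o', ho', h⟩ => ho.2 ⟨o', paretoFront_subset rU O ho', h⟩⟩

end Set

theorem stmt_19 {α : Type*} (O : Set α) (hfin : O.Finite)
    (rU rc : α → α → Prop)
    (hsub : ∀ x y, rU x y → rc x y)
    (hirr : ∀ x, ¬ rc x x)
    (htr : ∀ x y z, rc x y → rc y z → rc x z) :
    {o ∈ {o ∈ O | ¬ ∃ o' ∈ O, rU o' o} |
      ¬ ∃ o' ∈ {o ∈ O | ¬ ∃ o'' ∈ O, rU o'' o}, rc o' o} =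
    {o ∈ O | ¬ ∃ o' ∈ O, rc o' o} := by
  have : IsStrictOrder α rc := { irrefl := hirr, trans := htr }
  exact Set.paretoFront_paretoFront_of_le hsub hfin.wellFoundedOn htr
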